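/- Let (A, R, N) be a strongly consistent AFN and ADF^FN its corresponding ADF. Then: X ⊆ A is strongly coherent in (A, R, N) iff it is pd-acyclic conflict-free in ADF^FN; for σ ∈ {admissible, complete, preferred}, X is a σ-extension of (A, R, N) iff it is an aa-σ-extension of ADF^FN; X is stable in (A, R, N) iff it is stable in ADF^FN; and X is the grounded extension of (A, R, N) iff it is the acyclic grounded extension of ADF^FN. -/

import Mathlib

open Classical

universe u

namespace Dialectical

variable {α : Type u}

/-! ### Two-valued (partial) interpretations -/

/-- A partial two-valued interpretation: `some true` = t, `some false` = f, `none` = undefined. -/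
abbrev Interp (α : Type u) := α → Option Bool

/-- The domain of an interpretation. -/
def idom (v : Interp α) : Set α := {a | v a ≠ none}

/-- The set of arguments mapped to t. -/
def tset (v : Interp α) : Set α := {a | v a = some true}

/-- The set of arguments mapped to f. -/
def fset (v : Interp α) : Set α := {a | v a = some false}

/-- `w` is a completion of `v` to the set `Z`. -/
def Completion (v w : Interp α) (Z : Set α) : Prop :=
  idom w = Z ∧ ∀ a ∈ idom v, w a = v a

/-- The interpretation assigning t on `T` and f on `F' \ T`. -/
noncomputable def mkInterp (T F' : Set α) : Interp α :=
  fun a => if a ∈ T then some true else if a ∈ F' then some false else none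

/-! ### Abstract dialectical frameworks -/

/-- An abstract dialectical framework: links and acceptance conditions
(`true` = in, `false` = out). -/
structure ADF (α : Type u) where
  L : α → α → Prop
  C : α → Set α → Bool

namespace ADF

variable (D : ADF α)

/-- The parents of an argument. -/
def par (a : α) : Set α := {p | D.L p a}

/-- Evaluating the acceptance condition of `s` under an interpretation. -/
def evalCond (s : α) (w : Interp α) : Bool := D.C s (tset w ∩ D.par s)

/-- `s` is decisively in w.r.t. `v`. -/
def DecisivelyIn (v : Interp α) (s : α) : Prop :=
  ∀ w : Interp α, Completion v w (idom v ∪ D.par s) → D.evalCond s w = true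

/-- `s` is decisively out w.r.t. `v`. -/
def DecisivelyOut (v : Interp α) (s : α) : Prop :=
  ∀ w : Interp α, Completion v w (idom v ∪ D.par s) → D.evalCond s w = false

/-- `v` is a minimal decisively in interpretation for `s` (`v ∈ min_dec(in,s)`). -/
def MinDecIn (v : Interp α) (s : α) : Prop :=
  D.DecisivelyIn v s ∧
  ∀ w : Interp α, D.DecisivelyIn w s → tset w ⊆ tset v → fset w ⊆ fset v →
    tset w = tset v ∧ fset w = fset v

/-- `pd` is a positive dependency function on `X`. -/
def PDFun (X : Set α) (pd : α → Option (Interp α)) : Prop :=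
  ∀ a ∈ X,
    (∀ v, pd a = some v → D.MinDecIn v a ∧ tset v ⊆ X) ∧
    (pd a = none → ¬ ∃ v, D.MinDecIn v a ∧ tset v ⊆ X)

end ADF

/-- The subset of `X` on which `pd` is non-null. -/
def soundDom (X : Set α) (pd : α → Option (Interp α)) : Set α :=
  {a ∈ X | pd a ≠ none}

namespace ADF
variable (D : ADF α)

/-- `pd` is a maximally sound pd-function of `X`. -/
def MaxSound (X : Set α) (pd : α → Option (Interp α)) : Prop :=
  D.PDFun X pd ∧
  ¬ ∃ (X'' : Set α) (pd' : α → Option (Interp α)),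
      D.PDFun X'' pd' ∧ (∀ a ∈ X'', pd' a ≠ none) ∧
      soundDom X pd ⊂ X'' ∧ X'' ⊆ X ∧
      ∀ a ∈ soundDom X pd, pd' a = pd a

end ADF

/-- The t-part of the interpretation assigned by `pd` to `a`. -/
def pdT (pd : α → Option (Interp α)) (a : α) : Set α :=
  {b | ∃ v, pd a = some v ∧ b ∈ tset v}

/-- The f-part of the interpretation assigned by `pd` to `a`. -/
def pdF (pd : α → Option (Interp α)) (a : α) : Set α :=
  {b | ∃ v, pd a = some v ∧ b ∈ fset v}

namespace ADF

variable (D : ADF α)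

end ADF

/-- `(Fs, G, B)` is a partially acyclic positive dependency evaluation for `x`
based on the pd-function `pd` of `X`. -/
def IsPAEvalWith (pd : α → Option (Interp α)) (X : Set α)
    (x : α) (Fs : Set α) (G : List α) (B : Set α) : Prop :=
  (∀ a ∈ G, a ∉ Fs) ∧ G.Nodup ∧
  x ∈ X ∧ Fs ⊆ X ∧ (∀ a ∈ G, a ∈ X) ∧
  (∀ a ∈ Fs, pd a ≠ none) ∧ (∀ a ∈ G, pd a ≠ none) ∧
  (G = [] → x ∈ Fs) ∧ (G ≠ [] → G.getLast? = some x) ∧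
  (∀ i : ℕ, ∀ h : i < G.length,
      pdT pd (G.get ⟨i, h⟩) ⊆
        Fs ∪ {b | ∃ j : ℕ, ∃ hj : j < G.length, j < i ∧ G.get ⟨j, hj⟩ = b}) ∧
  (∀ a ∈ Fs, pdT pd a ⊆ Fs) ∧
  (∀ a ∈ Fs, ∃ b ∈ Fs, a ∈ pdT pd b) ∧
  B = (⋃ a ∈ Fs, pdF pd a) ∪ ⋃ a ∈ {c | c ∈ G}, pdF pd a

namespace ADF
variable (D : ADF α)

/-- `(Fs, G, B)` is a partially acyclic positive dependency evaluation for `x` on `X`. -/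
def PAEval (X : Set α) (x : α) (Fs : Set α) (G : List α) (B : Set α) : Prop :=
  ∃ pd, D.MaxSound X pd ∧ IsPAEvalWith pd X x Fs G B

/-- `(G, B)` is an acyclic positive dependency evaluation for `x` on `X`. -/
def AcyclicEval (X : Set α) (x : α) (G : List α) (B : Set α) : Prop :=
  D.PAEval X x ∅ G B

/-- The standard discarded set `X⁺`. -/
def stdDiscarded (X : Set α) : Set α :=
  {a | ∀ Fs G B, D.PAEval Set.univ a Fs G B → (B ∩ X).Nonempty}

/-- The partially acyclic discarded set `X^{p+}`. -/
def pDiscarded (X : Set α) : Set α :=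
  {a | ¬ ∃ Fs G B, D.PAEval Set.univ a Fs G B ∧ Fs ⊆ X ∧ B ∩ X = ∅}

/-- The acyclic discarded set `X^{a+}`. -/
def aDiscarded (X : Set α) : Set α :=
  {a | ∀ G B, D.AcyclicEval Set.univ a G B → (B ∩ X).Nonempty}

/-- The standard range of `X`. -/
noncomputable def stdRange (X : Set α) : Interp α := mkInterp X (D.stdDiscarded X \ X)

/-- The partially acyclic range of `X`. -/
noncomputable def pRange (X : Set α) : Interp α := mkInterp X (D.pDiscarded X \ X)

/-- The acyclic range of `X`. -/
noncomputable def aRange (X : Set α) : Interp α := mkInterp X (D.aDiscarded X \ X)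

/-- Conflict-freeness in an ADF. -/
def ConflictFree (X : Set α) : Prop := ∀ s ∈ X, D.C s (X ∩ D.par s) = true

/-- pd-acyclic conflict-freeness in an ADF. -/
def PDAcyclicCF (X : Set α) : Prop :=
  ∀ a ∈ X, ∃ G B, D.AcyclicEval X a G B ∧ B ∩ X = ∅

def CCAdmissible (X : Set α) : Prop :=
  D.ConflictFree X ∧ ∀ e ∈ X, D.DecisivelyIn (D.stdRange X) e

def CA2Admissible (X : Set α) : Prop :=
  D.ConflictFree X ∧ ∀ e ∈ X, D.DecisivelyIn (D.pRange X) e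

def AAAdmissible (X : Set α) : Prop :=
  D.PDAcyclicCF X ∧ ∀ e ∈ X, D.DecisivelyIn (D.aRange X) e

def CCComplete (X : Set α) : Prop :=
  D.CCAdmissible X ∧ ∀ e, D.DecisivelyIn (D.stdRange X) e → e ∈ X

def CA2Complete (X : Set α) : Prop :=
  D.CA2Admissible X ∧ ∀ e, D.DecisivelyIn (D.pRange X) e → e ∈ X

def AAComplete (X : Set α) : Prop :=
  D.AAAdmissible X ∧ ∀ e, D.DecisivelyIn (D.aRange X) e → e ∈ X

def CCPreferred (X : Set α) : Prop :=
  D.CCAdmissible X ∧ ∀ Y, D.CCAdmissible Y → X ⊆ Y → X = Y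

def CA2Preferred (X : Set α) : Prop :=
  D.CA2Admissible X ∧ ∀ Y, D.CA2Admissible Y → X ⊆ Y → X = Y

def AAPreferred (X : Set α) : Prop :=
  D.AAAdmissible X ∧ ∀ Y, D.AAAdmissible Y → X ⊆ Y → X = Y

/-- `X` is a model of the ADF. -/
def IsModel (X : Set α) : Prop :=
  D.ConflictFree X ∧ ∀ a, a ∉ X → D.C a (X ∩ D.par a) = false

/-- `X` is a stable extension of the ADF. -/
def IsStable (X : Set α) : Prop :=
  D.PDAcyclicCF X ∧ D.aDiscarded X = Xᶜ

/-- `X` is the grounded extension (the least cc-complete extension). -/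
def IsGrounded (X : Set α) : Prop :=
  D.CCComplete X ∧ ∀ Y, D.CCComplete Y → X ⊆ Y

/-- `X` is the acyclic grounded extension (the least aa-complete extension). -/
def IsAcyclicGrounded (X : Set α) : Prop :=
  D.AAComplete X ∧ ∀ Y, D.AAComplete Y → X ⊆ Y

/-- The link `(r,s)` is supporting. -/
def Supporting (r s : α) : Prop :=
  ¬ ∃ R' ⊆ D.par s, D.C s R' = true ∧ D.C s (R' ∪ {r}) = false

/-- The link `(r,s)` is attacking. -/
def Attacking (r s : α) : Prop :=
  ¬ ∃ R' ⊆ D.par s, D.C s R' = false ∧ D.C s (R' ∪ {r}) = true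

/-- Bipolar ADFs. -/
def IsBADF : Prop := ∀ r s, D.L r s → D.Supporting r s ∨ D.Attacking r s

/-- Positive dependency acyclic ADFs (AADF⁺): every partially acyclic evaluation is acyclic. -/
def IsAADFplus : Prop := ∀ X x Fs G B, D.PAEval X x Fs G B → Fs = ∅

end ADF

/-! ### Frameworks with sets of attacking arguments (SETAFs) -/

/-- A framework with sets of attacking arguments. -/
structure SETAF (α : Type u) where
  R : Set α → α → Prop
  nonempty_of_R : ∀ S a, R S a → S.Nonempty

namespace SETAF

variable (sf : SETAF α)

/-- `X` is conflict-free in the SETAF. -/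
def ConflictFree (X : Set α) : Prop := ¬ ∃ S ⊆ X, ∃ a ∈ X, sf.R S a

/-- The discarded set of `X` in the SETAF. -/
def discarded (X : Set α) : Set α := {b | ∃ S ⊆ X, sf.R S b}

/-- `X` defends `a` in the SETAF. -/
def Defends (X : Set α) (a : α) : Prop :=
  ∀ S, sf.R S a → ∃ s ∈ S, s ∈ sf.discarded X

def Admissible (X : Set α) : Prop := sf.ConflictFree X ∧ ∀ a ∈ X, sf.Defends X a

def Complete (X : Set α) : Prop := sf.Admissible X ∧ ∀ a, sf.Defends X a → a ∈ X

def Preferred (X : Set α) : Prop :=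
  sf.Admissible X ∧ ∀ Y, sf.Admissible Y → X ⊆ Y → X = Y

/-- `X` is the grounded extension: the least complete extension. -/
def IsGrounded (X : Set α) : Prop := sf.Complete X ∧ ∀ Y, sf.Complete Y → X ⊆ Y

def Stable (X : Set α) : Prop := sf.ConflictFree X ∧ sf.discarded X = Xᶜ

/-- The ADF corresponding to a SETAF. -/
noncomputable def toADF : ADF α where
  L x y := ∃ B : Set α, x ∈ B ∧ sf.R B y
  C a B := decide (¬ ∃ S, sf.R S a ∧ S ⊆ B)

end SETAF

/-! ### Extended argumentation frameworks with collective defense attacks (EAFCs) -/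

/-- An EAFC: binary attacks `R` and collective defense attacks `D` on attacks. -/
structure EAFC (α : Type u) where
  R : α → α → Prop
  D : Set α → α → α → Prop
  nonempty_of_D : ∀ C a b, D C a b → C.Nonempty
  attack_of_D : ∀ C a b, D C a b → R a b

namespace EAFC

variable (E : EAFC α)

/-- `a` defeats `b` w.r.t. `X`. -/
def Defeats (X : Set α) (a b : α) : Prop :=
  E.R a b ∧ ¬ ∃ C ⊆ X, E.D C a b

/-- `RS` is a reinstatement set on `X` for the defeat of `b` by `a`. -/
def Reinstatement (X : Set α) (RS : Set (α × α)) (a b : α) : Prop :=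
  RS.Finite ∧
  (∀ p ∈ RS, p.1 ∈ X ∧ E.Defeats X p.1 p.2) ∧
  (a, b) ∈ RS ∧
  ∀ p ∈ RS, ∀ C : Set α, E.D C p.1 p.2 → ∃ q ∈ RS, q.2 ∈ C

/-- The discarded set `X⁺` of `X` in the EAFC. -/
def discarded (X : Set α) : Set α :=
  {b | ∃ a ∈ X, E.Defeats X a b ∧ ∃ RS, E.Reinstatement X RS a b}

/-- `X` defends `a` in the EAFC. -/
def Defends (X : Set α) (a : α) : Prop :=
  ∀ b, E.Defeats X b a → b ∈ E.discarded X

/-- `X` is conflict-free in the EAFC. -/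
def ConflictFree (X : Set α) : Prop := ¬ ∃ a ∈ X, ∃ b ∈ X, E.Defeats X a b

def Admissible (X : Set α) : Prop := E.ConflictFree X ∧ ∀ a ∈ X, E.Defends X a

def Complete (X : Set α) : Prop := E.Admissible X ∧ ∀ a, E.Defends X a → a ∈ X

def Preferred (X : Set α) : Prop :=
  E.Admissible X ∧ ∀ Y, E.Admissible Y → X ⊆ Y → X = Y

def Stable (X : Set α) : Prop :=
  E.ConflictFree X ∧ ∀ b, b ∉ X → ∃ a ∈ X, E.Defeats X a b

/-- The characteristic function of the EAFC. -/
def charFun (X : Set α) : Set α := {a | E.Defends X a}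

/-- The grounded extension of the EAFC. -/
def grounded : Set α := ⋃ i : ℕ, E.charFun^[i] ∅

/-- Every argument has finitely many attackers, every attack finitely many defense attackers. -/
def Finitary : Prop :=
  (∀ a, {b | E.R b a}.Finite) ∧ ∀ a b, {C | E.D C a b}.Finite

/-- Strong consistency of an EAFC. -/
def StronglyConsistent : Prop :=
  ¬ ∃ (x y z : α) (X : Set α), E.R x y ∧ x ∈ X ∧ E.D X z y

/-- The EAFC is bounded hierarchical. -/
def BoundedHierarchical : Prop :=
  ∃ n : ℕ, ∃ hn : 0 < n,
    ∃ (As : Fin n → Set α) (Rs : Fin n → α → α → Prop)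
      (Ds : Fin n → Set α → α → α → Prop),
      (∀ C a b, ¬ Ds ⟨n - 1, Nat.sub_lt hn one_pos⟩ C a b) ∧
      (Set.univ = ⋃ i, As i) ∧
      (∀ a b, E.R a b ↔ ∃ i, Rs i a b) ∧
      (∀ C a b, E.D C a b ↔ ∃ i, Ds i C a b) ∧
      (∀ i a b, Rs i a b → a ∈ As i ∧ b ∈ As i) ∧
      (∀ i C a b, Ds i C a b → Rs i a b ∧
        ∃ h : (i : ℕ) + 1 < n, C ⊆ As ⟨(i : ℕ) + 1, h⟩)

/-- The ADF corresponding to a strongly consistent EAFC. -/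
noncomputable def toADF : ADF α where
  L a b := E.R a b ∨ ∃ (c : α) (X : Set α), a ∈ X ∧ E.D X c b
  C a B := decide (¬ ∃ x ∈ B, E.R x a ∧ ¬ ∃ B' ⊆ B, E.D B' x a)

end EAFC

/-! ### Argumentation frameworks with necessities (AFNs) -/

/-- An AFN: binary attacks `R` and necessity relation `N`. -/
structure AFN (α : Type u) where
  R : α → α → Prop
  N : Set α → α → Prop
  nonempty_of_N : ∀ B a, N B a → B.Nonempty

namespace AFN

variable (fn : AFN α)

/-- `G` is a powerful sequence for `a` on `X`. -/
def PowerfulSeq (X : Set α) (G : List α) (a : α) : Prop :=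
  G ≠ [] ∧ (∀ b ∈ G, b ∈ X) ∧ G.getLast? = some a ∧
  ∀ i : ℕ, ∀ h : i < G.length, ∀ B : Set α, fn.N B (G.get ⟨i, h⟩) →
    ∃ j : ℕ, ∃ hj : j < G.length, j < i ∧ G.get ⟨j, hj⟩ ∈ B

/-- `a` is powerful in `X`. -/
def Powerful (X : Set α) (a : α) : Prop :=
  a ∈ X ∧ ∃ G, fn.PowerfulSeq X G a

/-- `X` is coherent. -/
def Coherent (X : Set α) : Prop := ∀ a ∈ X, fn.Powerful X a

/-- The discarded set `X^att` of `X` in the AFN. -/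
def discardedAtt (X : Set α) : Set α :=
  {a | ∀ C, fn.Coherent C → a ∈ C → ∃ c ∈ C, ∃ e ∈ X, fn.R e c}

/-- `X` is conflict-free in the AFN. -/
def ConflictFree (X : Set α) : Prop := ¬ ∃ a ∈ X, ∃ b ∈ X, fn.R a b

/-- `X` is strongly coherent. -/
def StronglyCoherent (X : Set α) : Prop := fn.ConflictFree X ∧ fn.Coherent X

/-- The deactivated set `X⁺` of `X` in the AFN. -/
def deactivated (X : Set α) : Set α :=
  {a | (∃ e ∈ X, fn.R e a) ∨ ∃ B, fn.N B a ∧ X ∩ B = ∅}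

/-- `X` defends `a` in the AFN. -/
def Defends (X : Set α) (a : α) : Prop :=
  fn.Coherent (X ∪ {a}) ∧ ∀ b, fn.R b a → b ∈ fn.discardedAtt X

def Admissible (X : Set α) : Prop := fn.StronglyCoherent X ∧ ∀ a ∈ X, fn.Defends X a

def Complete (X : Set α) : Prop := fn.Admissible X ∧ ∀ a, fn.Defends X a → a ∈ X

def Preferred (X : Set α) : Prop :=
  fn.Admissible X ∧ ∀ Y, fn.Admissible Y → X ⊆ Y → X = Y

/-- `X` is the grounded extension: the least complete extension. -/
def IsGrounded (X : Set α) : Prop := fn.Complete X ∧ ∀ Y, fn.Complete Y → X ⊆ Y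

/-- Stability via completeness and the deactivated set. -/
def Stable (X : Set α) : Prop := fn.Complete X ∧ fn.deactivated X = Xᶜ

/-- Stability via strong coherence and the discarded set. -/
def StableAtt (X : Set α) : Prop :=
  fn.StronglyCoherent X ∧ fn.discardedAtt X = Xᶜ

/-- Strong consistency of an AFN: no argument is both supported and attacked by
the same argument. -/
def StronglyConsistent : Prop :=
  ∀ a : α, {b | ∃ B, b ∈ B ∧ fn.N B a} ∩ {b | fn.R b a} = ∅

/-- The ADF corresponding to a strongly consistent AFN. -/
noncomputable def toADF : ADF α where
  L x y := fn.R x y ∨ ∃ B, x ∈ B ∧ fn.N B y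
  C a P := decide (¬ ((∃ p ∈ P, fn.R p a) ∨ ∃ Z, fn.N Z a ∧ Z ∩ P = ∅))

end AFN

end Dialectical

/-!
In the ADF of a strongly consistent AFN, `s` is decisively in w.r.t. `v` iff `v` sets every
attacker of `s` to f and some argument of every necessity set of `s` to t. Hence a minimal
decisively-in interpretation for `s` sets exactly the attackers of `s` to f and a minimal hitting
set of the necessity sets of `s` to t; strong consistency keeps the two apart, so such an
interpretation exists inside every finite hitting set. It follows that the acyclic evaluations of `a`
are exactly the duplicate-free powerful sequences for `a`, their set `B` being the attackers of
the sequence. So pd-acyclic conflict-freeness is strong coherence, the acyclic discarded set is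
`X^att`, being decisively in w.r.t. the acyclic range means being defended, and every
semantics transfers.
-/

theorem List.mem_take_iff_exists_get {α : Type*} {G : List α} {i : ℕ} {b : α} :
    b ∈ G.take i ↔ ∃ j, ∃ hj : j < G.length, j < i ∧ G.get ⟨j, hj⟩ = b := by
  rw [List.mem_take_iff_getElem]
  constructor
  · rintro ⟨j, hj, rfl⟩
    exact ⟨j, by omega, by omega, rfl⟩
  · rintro ⟨j, hj, hji, rfl⟩
    exact ⟨j, by omega, rfl⟩

namespace Dialectical

variable {α : Type*}

theorem tset_mkInterp (T F : Set α) : tset (mkInterp T F) = T := by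
  ext a
  simp only [tset, mkInterp, Set.mem_ofPred_eq]
  split_ifs <;> simp_all

theorem fset_mkInterp (T F : Set α) : fset (mkInterp T F) = F \ T := by
  ext a
  simp only [fset, mkInterp, Set.mem_ofPred_eq, Set.mem_sdiff]
  split_ifs <;> simp_all

theorem disjoint_tset_fset (v : Interp α) : Disjoint (tset v) (fset v) :=
  Set.disjoint_left.2 fun a (ht : v a = _) (hf : v a = _) => by simp [ht] at hf

theorem Completion.tset_subset {v w : Interp α} {Z : Set α} (h : Completion v w Z) :
    tset v ⊆ tset w := fun a (ha : v a = _) => by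
  show w a = _
  rw [h.2 a (by simp [idom, ha]), ha]

theorem Completion.disjoint_tset_fset {v w : Interp α} {Z : Set α} (h : Completion v w Z) :
    Disjoint (tset w) (fset v) :=
  Set.disjoint_left.2 fun a (hw : w a = _) (hv : v a = _) => by
    rw [h.2 a (by simp [idom, hv]), hv] at hw
    simp at hw

namespace ADF

variable (D : ADF α)

theorem decisivelyIn_iff {v : Interp α} {s : α} :
    D.DecisivelyIn v s ↔
      ∀ P, tset v ∩ D.par s ⊆ P → P ⊆ D.par s \ fset v → D.C s P = true := by
  classical
  constructor
  · intro hv P hlo hhi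
    let w : Interp α := fun x =>
      if x ∈ idom v then v x
      else if x ∈ P then some true else if x ∈ D.par s then some false else none
    have hw : Completion v w (idom v ∪ D.par s) := by
      refine ⟨Set.ext fun x => ?_, fun x hx => if_pos hx⟩
      by_cases h1 : x ∈ idom v <;> by_cases h2 : x ∈ P <;> by_cases h3 : x ∈ D.par s <;>
        simp_all [w, idom, (hhi · |>.1)]
    have hP : tset w ∩ D.par s = P := by
      ext x
      by_cases h1 : x ∈ idom v
      · have hlo' := @hlo x
        have hhi' := @hhi x
        rcases hvx : v x with _ | _ | _ <;> simp_all [w, idom, tset, fset]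
        tauto
      · by_cases h2 : x ∈ P <;> simp_all [w, tset, (hhi · |>.1)]
    simpa [evalCond, hP] using hv w hw
  · intro h w hw
    exact h _ (Set.inter_subset_inter_left _ hw.tset_subset)
      fun x hx => ⟨hx.2, Set.disjoint_left.1 hw.disjoint_tset_fset hx.1⟩

theorem PDFun.maxSound {X : Set α} {pd : α → Option (Interp α)} (h : D.PDFun X pd) :
    D.MaxSound X pd := by
  refine ⟨h, ?_⟩
  rintro ⟨X'', pd', hpd', hsound, hsub, hX'', -⟩
  obtain ⟨c, hc, hcdom⟩ := Set.exists_of_ssubset hsub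
  obtain ⟨v, hv⟩ := Option.ne_none_iff_exists'.1 (hsound c hc)
  obtain ⟨hvmin, hvt⟩ := (hpd' c hc).1 v hv
  have hnone : pd c = none := not_not.1 fun hne => hcdom ⟨hX'' hc, hne⟩
  exact (h c (hX'' hc)).2 hnone ⟨v, hvmin, hvt.trans hX''⟩

theorem exists_maxSound {X : Set α} (W : α → Set α) (hW : ∀ b, W b ⊆ X) :
    ∃ pd, D.MaxSound X pd ∧ ∀ b, (∃ v, D.MinDecIn v b ∧ tset v ⊆ W b) →
      ∃ v, pd b = some v ∧ D.MinDecIn v b ∧ tset v ⊆ W b := by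
  classical
  let pd : α → Option (Interp α) := fun b =>
    if h : ∃ v, D.MinDecIn v b ∧ tset v ⊆ W b then some h.choose
    else if h' : ∃ v, D.MinDecIn v b ∧ tset v ⊆ X then some h'.choose else none
  refine ⟨pd, PDFun.maxSound D fun b _ => ⟨fun v hv => ?_, fun hv => ?_⟩,
    fun b h => ⟨_, dif_pos h, h.choose_spec⟩⟩
  · simp only [pd] at hv
    split_ifs at hv with h h'
    · cases hv
      exact ⟨h.choose_spec.1, h.choose_spec.2.trans (hW b)⟩
    · cases hv
      exact h'.choose_spec
  · simp only [pd] at hv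
    split_ifs at hv with h h'
    exact h'

end ADF

theorem pdT_of_eq_some {pd : α → Option (Interp α)} {b : α} {v : Interp α}
    (h : pd b = some v) : pdT pd b = tset v := by
  ext c
  simp [pdT, h]

theorem pdF_of_eq_some {pd : α → Option (Interp α)} {b : α} {v : Interp α}
    (h : pd b = some v) : pdF pd b = fset v := by
  ext c
  simp [pdF, h]

namespace AFN

variable (fn : AFN α)

def Supports (T : Set α) (s : α) : Prop := ∀ Z, fn.N Z s → (Z ∩ T).Nonempty

variable {fn}

theorem Supports.mono {T T' : Set α} {s : α} (h : fn.Supports T s) (hT : T ⊆ T') :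
    fn.Supports T' s := fun Z hZ => (h Z hZ).mono (Set.inter_subset_inter_right Z hT)

theorem toADF_decisivelyIn_iff {v : Interp α} {s : α} :
    fn.toADF.DecisivelyIn v s ↔ {b | fn.R b s} ⊆ fset v ∧ fn.Supports (tset v) s := by
  rw [ADF.decisivelyIn_iff]
  simp only [AFN.toADF, decide_eq_true_eq]
  constructor
  · intro h
    have hdisj : tset v ∩ fn.toADF.par s ⊆ fn.toADF.par s \ fset v :=
      fun x hx => ⟨hx.2, Set.disjoint_left.1 (disjoint_tset_fset v) hx.1⟩
    refine ⟨fun b hb => ?_, fun Z hZ => ?_⟩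
    · by_contra hbf
      exact h _ hdisj subset_rfl (Or.inl ⟨b, ⟨Or.inl hb, hbf⟩, hb⟩)
    · by_contra hZP
      refine h _ subset_rfl hdisj (Or.inr ⟨Z, hZ, Set.subset_empty_iff.1 ?_⟩)
      rw [← Set.not_nonempty_iff_eq_empty.1 hZP]
      exact Set.inter_subset_inter_right Z Set.inter_subset_left
  · rintro ⟨hatt, hsup⟩ P hlo hhi (⟨p, hp, hR⟩ | ⟨Z, hZ, hZP⟩)
    · exact (hhi hp).2 (hatt hR)
    · obtain ⟨z, hzZ, hz⟩ := hsup Z hZ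
      exact Set.eq_empty_iff_forall_notMem.1 hZP z ⟨hzZ, hlo ⟨hz, Or.inr ⟨Z, hzZ, hZ⟩⟩⟩

theorem toADF_decisivelyIn_mkInterp {T : Set α} {s : α} (hT : fn.Supports T s)
    (hRT : ∀ b ∈ T, ¬ fn.R b s) : fn.toADF.DecisivelyIn (mkInterp T {b | fn.R b s}) s := by
  rw [toADF_decisivelyIn_iff, tset_mkInterp, fset_mkInterp]
  exact ⟨fun b hb => ⟨hb, fun hbT => hRT b hbT hb⟩, hT⟩

theorem fset_eq_of_toADF_minDecIn {v : Interp α} {s : α} (hv : fn.toADF.MinDecIn v s) :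
    fset v = {b | fn.R b s} := by
  obtain ⟨hatt, hsup⟩ := toADF_decisivelyIn_iff.1 hv.1
  have hRT : ∀ b ∈ tset v, ¬ fn.R b s := fun b hbt hb =>
    Set.disjoint_left.1 (disjoint_tset_fset v) hbt (hatt hb)
  have heq := (hv.2 _ (toADF_decisivelyIn_mkInterp hsup hRT) (tset_mkInterp _ _).le
    (by rw [fset_mkInterp]; exact Set.sdiff_subset.trans hatt)).2
  rw [← heq, fset_mkInterp, sdiff_eq_left]
  exact Set.disjoint_right.2 fun b hbt hb => hRT b hbt hb

theorem exists_N_of_mem_minimal_supports {T : Set α} {s t : α}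
    (hT : Minimal (fn.Supports · s) T) (ht : t ∈ T) : ∃ Z, fn.N Z s ∧ t ∈ Z := by
  by_contra! h
  have hsup : fn.Supports (T \ {t}) s := fun Z hZ => by
    obtain ⟨z, hzZ, hzT⟩ := hT.1 Z hZ
    exact ⟨z, hzZ, hzT, fun hzt => h Z hZ (hzt ▸ hzZ)⟩
  exact (hT.2 hsup Set.sdiff_subset ht).2 rfl

theorem exists_toADF_minDecIn_subset (hsc : fn.StronglyConsistent) {s : α} {W : Set α}
    (hWfin : W.Finite) (hW : fn.Supports W s) :
    ∃ v, fn.toADF.MinDecIn v s ∧ tset v ⊆ W := by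
  have hfin : {T | T ⊆ W ∧ fn.Supports T s}.Finite :=
    hWfin.finite_subsets.subset fun T hT => hT.1
  obtain ⟨T, hTW, hT⟩ := hfin.exists_le_minimal ⟨subset_rfl, hW⟩
  have hmin : Minimal (fn.Supports · s) T :=
    ⟨hT.1.2, fun T' hT' hle => hT.2 ⟨hle.trans hTW, hT'⟩ hle⟩
  have hRT : ∀ t ∈ T, ¬ fn.R t s := fun t ht hR => by
    obtain ⟨Z, hZ, htZ⟩ := exists_N_of_mem_minimal_supports hmin ht
    exact Set.eq_empty_iff_forall_notMem.1 (hsc s) t ⟨⟨Z, htZ, hZ⟩, hR⟩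
  refine ⟨mkInterp T {b | fn.R b s}, ⟨toADF_decisivelyIn_mkInterp hmin.1 hRT,
    fun w hw ht hf => ?_⟩, by rwa [tset_mkInterp]⟩
  obtain ⟨hatt, hsup⟩ := toADF_decisivelyIn_iff.1 hw
  rw [tset_mkInterp] at ht ⊢
  rw [fset_mkInterp] at hf ⊢
  exact ⟨ht.antisymm (hmin.2 hsup ht), hf.antisymm (Set.sdiff_subset.trans hatt)⟩

variable (fn) in
def Grounded (G : List α) : Prop :=
  ∀ i (h : i < G.length), fn.Supports {b | b ∈ G.take i} G[i]

theorem grounded_iff_get {G : List α} :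
    fn.Grounded G ↔ ∀ i (h : i < G.length) B, fn.N B (G.get ⟨i, h⟩) →
      ∃ j, ∃ hj : j < G.length, j < i ∧ G.get ⟨j, hj⟩ ∈ B := by
  constructor
  · intro hG i hi B hB
    obtain ⟨b, hbB, hb⟩ := hG i hi B hB
    obtain ⟨j, hj, hji, rfl⟩ := List.mem_take_iff_exists_get.1 hb
    exact ⟨j, hj, hji, hbB⟩
  · intro hG i hi B hB
    obtain ⟨j, hj, hji, hjB⟩ := hG i hi B hB
    exact ⟨_, hjB, List.mem_take_iff_exists_get.2 ⟨j, hj, hji, rfl⟩⟩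

theorem grounded_nil : fn.Grounded [] := fun _ h => absurd h (Nat.not_lt_zero _)

theorem grounded_append_singleton_iff {G : List α} {b : α} :
    fn.Grounded (G ++ [b]) ↔ fn.Grounded G ∧ fn.Supports {x | x ∈ G} b := by
  constructor
  · intro h
    refine ⟨fun i hi => ?_, ?_⟩
    · have := h i (by simp; omega)
      rwa [List.getElem_append_left hi, List.take_append_of_le_length hi.le] at this
    · simpa using h G.length (by simp)
  · rintro ⟨hG, hb⟩ i hi
    rcases Nat.lt_or_ge i G.length with hi' | hi'
    · rw [List.getElem_append_left hi', List.take_append_of_le_length hi'.le]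
      exact hG i hi'
    · obtain rfl : i = G.length := by simp at hi; omega
      simpa using hb

theorem Grounded.append {G H : List α} (hG : fn.Grounded G) (hH : fn.Grounded H) :
    fn.Grounded (G ++ H) := by
  induction H using List.reverseRecOn with
  | nil => simpa
  | append_singleton H b ih =>
    rw [grounded_append_singleton_iff] at hH
    rw [← List.append_assoc, grounded_append_singleton_iff]
    exact ⟨ih hH.1, hH.2.mono fun x hx => List.mem_append_right G hx⟩

theorem Grounded.take {G : List α} (hG : fn.Grounded G) (n : ℕ) : fn.Grounded (G.take n) := by
  intro i hi
  simp only [List.length_take] at hi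
  simpa [List.take_take, Nat.min_eq_left (show i ≤ n by omega)] using hG i (by omega)

theorem Grounded.supports_take_idxOf {G : List α} {a : α} (hG : fn.Grounded G) (ha : a ∈ G) :
    fn.Supports {x | x ∈ G.take (G.idxOf a)} a := by
  have hi := List.idxOf_lt_length_iff.2 ha
  simpa only [List.getElem_idxOf hi] using hG _ hi

theorem Grounded.exists_nodup {G : List α} (hG : fn.Grounded G) :
    ∃ H, H.Nodup ∧ fn.Grounded H ∧ ∀ x, x ∈ H ↔ x ∈ G := by
  induction G using List.reverseRecOn with
  | nil => exact ⟨[], List.nodup_nil, hG, fun _ => Iff.rfl⟩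
  | append_singleton G b ih =>
    rw [grounded_append_singleton_iff] at hG
    obtain ⟨H, hnd, hH, hmem⟩ := ih hG.1
    by_cases hb : b ∈ H
    · refine ⟨H, hnd, hH, fun x => ?_⟩
      rw [List.mem_append, List.mem_singleton, ← hmem]
      exact ⟨Or.inl, by rintro (hx | rfl) <;> assumption⟩
    · refine ⟨H ++ [b], by simpa using hnd.concat hb,
        grounded_append_singleton_iff.2 ⟨hH, hG.2.mono fun x => (hmem x).2⟩,
        fun x => by simp [hmem]⟩

theorem Grounded.exists_nodup_getLast? {G : List α} {a : α} (hG : fn.Grounded G) (ha : a ∈ G) :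
    ∃ H, H.Nodup ∧ fn.Grounded H ∧ (∀ x ∈ H, x ∈ G) ∧ H.getLast? = some a := by
  obtain ⟨H, hnd, hH, hmem⟩ := hG.exists_nodup
  have hi := List.idxOf_lt_length_iff.2 ((hmem a).2 ha)
  refine ⟨H.take (H.idxOf a + 1), hnd.sublist (List.take_sublist _ _), hH.take _,
    fun x hx => (hmem x).1 (List.mem_of_mem_take hx), ?_⟩
  simp [List.getLast?_take, List.getElem?_eq_getElem hi, List.getElem_idxOf hi]

theorem powerful_iff {X : Set α} {a : α} :
    fn.Powerful X a ↔ ∃ G, fn.Grounded G ∧ (∀ b ∈ G, b ∈ X) ∧ a ∈ G := by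
  constructor
  · rintro ⟨-, G, -, hGX, hlast, hG⟩
    exact ⟨G, grounded_iff_get.2 hG, hGX, List.mem_of_getLast? hlast⟩
  · rintro ⟨G, hG, hGX, ha⟩
    obtain ⟨H, -, hH, hHG, hlast⟩ := hG.exists_nodup_getLast? ha
    exact ⟨hGX a ha, H, List.ne_nil_of_mem (List.mem_of_getLast? hlast),
      fun b hb => hGX b (hHG b hb), hlast, grounded_iff_get.1 hH⟩

theorem Coherent.exists_grounded_cover [Finite α] {X : Set α} (hX : fn.Coherent X) :
    ∃ G, fn.Grounded G ∧ (∀ b ∈ G, b ∈ X) ∧ ∀ x ∈ X, x ∈ G := by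
  have cover : ∀ L : List α, (∀ x ∈ L, x ∈ X) →
      ∃ G, fn.Grounded G ∧ (∀ b ∈ G, b ∈ X) ∧ ∀ x ∈ L, x ∈ G := by
    intro L
    induction L with
    | nil => exact fun _ => ⟨[], grounded_nil, by simp, by simp⟩
    | cons x L ih =>
      intro hL
      obtain ⟨G, hG, hGX, hLG⟩ := ih fun y hy => hL y (List.mem_cons_of_mem x hy)
      obtain ⟨H, hH, hHX, hxH⟩ := powerful_iff.1 (hX x (hL x List.mem_cons_self))
      refine ⟨H ++ G, hH.append hG, fun b hb => ?_, fun y hy => ?_⟩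
      · rcases List.mem_append.1 hb with hb | hb
        exacts [hHX b hb, hGX b hb]
      · rcases List.mem_cons.1 hy with rfl | hy
        exacts [List.mem_append_left G hxH, List.mem_append_right H (hLG y hy)]
  obtain ⟨G, hG, hGX, hcov⟩ := cover (Set.toFinite X).toFinset.toList (by simp)
  exact ⟨G, hG, hGX, fun x hx => hcov x (by simpa using hx)⟩

theorem Coherent.union_singleton_iff [Finite α] {X : Set α} (hX : fn.Coherent X) {a : α} :
    fn.Coherent (X ∪ {a}) ↔ fn.Supports X a := by
  constructor
  · intro h
    obtain ⟨G, hG, hGX, haG⟩ := powerful_iff.1 (h a (Or.inr rfl))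
    refine (hG.supports_take_idxOf haG).mono fun x hx => ?_
    have hxa : x ≠ a := by
      rintro rfl
      exact lt_irrefl _ ((List.mem_take_iff_idxOf_lt haG).1 hx)
    exact (hGX x (List.mem_of_mem_take hx)).resolve_right hxa
  · intro ha b hb
    rw [powerful_iff]
    rcases hb with hb | rfl
    · obtain ⟨G, hG, hGX, hbG⟩ := powerful_iff.1 (hX b hb)
      exact ⟨G, hG, fun x hx => Or.inl (hGX x hx), hbG⟩
    · obtain ⟨G, hG, hGX, hcov⟩ := hX.exists_grounded_cover
      refine ⟨G ++ [b], grounded_append_singleton_iff.2 ⟨hG, ha.mono hcov⟩, fun x hx => ?_,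
        by simp⟩
      rcases List.mem_append.1 hx with hx | hx
      exacts [Or.inl (hGX x hx), Or.inr (List.mem_singleton.1 hx)]

theorem pdF_eq_of_toADF_pdFun {X : Set α} {pd : α → Option (Interp α)}
    (hpd : fn.toADF.PDFun X pd) {c : α} (hc : c ∈ X) (hne : pd c ≠ none) :
    pdF pd c = {b | fn.R b c} := by
  obtain ⟨v, hv⟩ := Option.ne_none_iff_exists'.1 hne
  rw [pdF_of_eq_some hv, fset_eq_of_toADF_minDecIn ((hpd c hc).1 v hv).1]

theorem exists_toADF_maxSound_of_grounded (hsc : fn.StronglyConsistent) {X : Set α}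
    {G : List α} (hG : fn.Grounded G) (hGX : ∀ b ∈ G, b ∈ X) :
    ∃ pd, fn.toADF.MaxSound X pd ∧
      ∀ b ∈ G, ∃ v, pd b = some v ∧ tset v ⊆ {x | x ∈ G.take (G.idxOf b)} := by
  obtain ⟨pd, hmax, hpd⟩ := fn.toADF.exists_maxSound (fun b => {x | x ∈ G.take (G.idxOf b)})
    fun b x hx => hGX x (List.mem_of_mem_take hx)
  refine ⟨pd, hmax, fun b hb => ?_⟩
  obtain ⟨v, hv, -, hvG⟩ := hpd b (exists_toADF_minDecIn_subset hsc (List.finite_toSet _)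
    (hG.supports_take_idxOf hb))
  exact ⟨v, hv, hvG⟩

theorem toADF_acyclicEval_iff (hsc : fn.StronglyConsistent) {X : Set α} {a : α}
    {G : List α} {B : Set α} :
    fn.toADF.AcyclicEval X a G B ↔
      G.Nodup ∧ fn.Grounded G ∧ (∀ b ∈ G, b ∈ X) ∧ G.getLast? = some a ∧
        B = ⋃ c ∈ {c | c ∈ G}, {b | fn.R b c} := by
  constructor
  · rintro ⟨pd, ⟨hpd, -⟩, -, hnd, -, -, hGX, -, hGpd, hnil, hlast, hT, -, -, rfl⟩
    have hne : G ≠ [] := fun h => Set.notMem_empty a (hnil h)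
    refine ⟨hnd, fun i hi Z hZ => ?_, hGX, hlast hne, ?_⟩
    · obtain ⟨v, hv⟩ := Option.ne_none_iff_exists'.1 (hGpd _ (List.getElem_mem hi))
      obtain ⟨-, hsup⟩ :=
        toADF_decisivelyIn_iff.1 ((hpd _ (hGX _ (List.getElem_mem hi))).1 v hv).1.1
      obtain ⟨z, hzZ, hz⟩ := hsup Z hZ
      have hzT : z ∈ pdT pd (G.get ⟨i, hi⟩) := by
        rw [List.get_eq_getElem, pdT_of_eq_some hv]
        exact hz
      rcases hT i hi hzT with hz0 | hzG
      exacts [absurd hz0 (Set.notMem_empty z), ⟨z, hzZ, List.mem_take_iff_exists_get.2 hzG⟩]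
    · rw [Set.biUnion_empty, Set.empty_union]
      exact Set.iUnion₂_congr fun c hc => pdF_eq_of_toADF_pdFun hpd (hGX c hc) (hGpd c hc)
  · rintro ⟨hnd, hG, hGX, hlast, rfl⟩
    obtain ⟨pd, hmax, hpd⟩ := exists_toADF_maxSound_of_grounded hsc hG hGX
    have hGpd : ∀ b ∈ G, pd b ≠ none := fun b hb => by
      obtain ⟨v, hv, -⟩ := hpd b hb
      simp [hv]
    refine ⟨pd, hmax, fun _ _ => Set.notMem_empty _, hnd, hGX a (List.mem_of_getLast? hlast),
      Set.empty_subset X, hGX, fun _ h => absurd h (Set.notMem_empty _), hGpd,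
      fun h => absurd hlast (by simp [h]), fun _ => hlast, fun i hi x hx => ?_,
      fun _ h => absurd h (Set.notMem_empty _), fun _ h => absurd h (Set.notMem_empty _), ?_⟩
    · obtain ⟨v, hv, hvG⟩ := hpd _ (List.getElem_mem hi)
      rw [List.get_eq_getElem, pdT_of_eq_some hv] at hx
      have hxG := hvG hx
      rw [Set.mem_ofPred_eq, hnd.idxOf_getElem] at hxG
      exact Or.inr (List.mem_take_iff_exists_get.1 hxG)
    · rw [Set.biUnion_empty, Set.empty_union]
      exact Set.iUnion₂_congr fun c hc =>
        (pdF_eq_of_toADF_pdFun hmax.1 (hGX c hc) (hGpd c hc)).symm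

theorem toADF_aDiscarded (hsc : fn.StronglyConsistent) (X : Set α) :
    fn.toADF.aDiscarded X = fn.discardedAtt X := by
  ext a
  simp only [ADF.aDiscarded, AFN.discardedAtt, Set.mem_ofPred_eq, toADF_acyclicEval_iff hsc]
  constructor
  · intro h C hC haC
    obtain ⟨G, hG, hGC, haG⟩ := powerful_iff.1 (hC a haC)
    obtain ⟨H, hnd, hH, hHG, hlast⟩ := hG.exists_nodup_getLast? haG
    obtain ⟨e, heH, he⟩ := h H _ ⟨hnd, hH, fun _ _ => trivial, hlast, rfl⟩
    obtain ⟨c, hc, hR⟩ := Set.mem_iUnion₂.1 heH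
    exact ⟨c, hGC c (hHG c hc), e, he, hR⟩
  · rintro h G B ⟨-, hG, -, hlast, rfl⟩
    obtain ⟨c, hc, e, he, hR⟩ := h {c | c ∈ G}
      (fun c hc => powerful_iff.2 ⟨G, hG, fun _ => id, hc⟩) (List.mem_of_getLast? hlast)
    exact ⟨e, Set.mem_biUnion hc hR, he⟩

theorem toADF_pdAcyclicCF_iff (hsc : fn.StronglyConsistent) {X : Set α} :
    fn.toADF.PDAcyclicCF X ↔ fn.StronglyCoherent X := by
  simp only [ADF.PDAcyclicCF, toADF_acyclicEval_iff hsc]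
  constructor
  · intro h
    refine ⟨?_, fun a ha => ?_⟩
    · rintro ⟨x, hx, y, hy, hR⟩
      obtain ⟨G, _, ⟨-, -, -, hlast, rfl⟩, hGX⟩ := h y hy
      exact Set.eq_empty_iff_forall_notMem.1 hGX x
        ⟨Set.mem_biUnion (List.mem_of_getLast? hlast) hR, hx⟩
    · obtain ⟨G, _, ⟨-, hG, hGX, hlast, -⟩, -⟩ := h a ha
      exact powerful_iff.2 ⟨G, hG, hGX, List.mem_of_getLast? hlast⟩
  · rintro ⟨hcf, hcoh⟩ a ha
    obtain ⟨G, hG, hGX, haG⟩ := powerful_iff.1 (hcoh a ha)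
    obtain ⟨H, hnd, hH, hHG, hlast⟩ := hG.exists_nodup_getLast? haG
    refine ⟨H, _, ⟨hnd, hH, fun b hb => hGX b (hHG b hb), hlast, rfl⟩,
      Set.eq_empty_iff_forall_notMem.2 fun x ⟨hx, hxX⟩ => ?_⟩
    obtain ⟨c, hc, hR⟩ := Set.mem_iUnion₂.1 hx
    exact hcf ⟨x, hxX, c, hGX c (hHG c hc), hR⟩

theorem StronglyCoherent.notMem_of_mem_discardedAtt {X : Set α} {b : α}
    (hX : fn.StronglyCoherent X) (hb : b ∈ fn.discardedAtt X) : b ∉ X := fun hbX => by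
  obtain ⟨c, hc, e, he, hR⟩ := hb X hX.2 hbX
  exact hX.1 ⟨e, he, c, hc, hR⟩

theorem toADF_decisivelyIn_aRange_iff (hsc : fn.StronglyConsistent) {X : Set α} {e : α} :
    fn.toADF.DecisivelyIn (fn.toADF.aRange X) e ↔
      {b | fn.R b e} ⊆ fn.discardedAtt X \ X ∧ fn.Supports X e := by
  rw [toADF_decisivelyIn_iff, ADF.aRange, tset_mkInterp, fset_mkInterp, toADF_aDiscarded hsc,
    sdiff_sdiff_left, sup_idem]

theorem defends_iff_toADF_decisivelyIn [Finite α] (hsc : fn.StronglyConsistent) {X : Set α}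
    (hX : fn.StronglyCoherent X) {a : α} :
    fn.Defends X a ↔ fn.toADF.DecisivelyIn (fn.toADF.aRange X) a := by
  rw [toADF_decisivelyIn_aRange_iff hsc, Defends, hX.2.union_singleton_iff, and_comm]
  exact and_congr_left' ⟨fun h b hb => ⟨h b hb, hX.notMem_of_mem_discardedAtt (h b hb)⟩,
    fun h b hb => (h hb).1⟩

theorem admissible_iff_toADF_aaAdmissible [Finite α] (hsc : fn.StronglyConsistent)
    (X : Set α) : fn.Admissible X ↔ fn.toADF.AAAdmissible X := by
  rw [Admissible, ADF.AAAdmissible, toADF_pdAcyclicCF_iff hsc]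
  exact and_congr_right fun hX => forall₂_congr fun a _ => defends_iff_toADF_decisivelyIn hsc hX

theorem complete_iff_toADF_aaComplete [Finite α] (hsc : fn.StronglyConsistent)
    (X : Set α) : fn.Complete X ↔ fn.toADF.AAComplete X := by
  rw [Complete, ADF.AAComplete, admissible_iff_toADF_aaAdmissible hsc]
  exact and_congr_right fun hX => forall_congr' fun a => imp_congr_left
    (defends_iff_toADF_decisivelyIn hsc ((admissible_iff_toADF_aaAdmissible hsc X).2 hX).1)

end AFN

end Dialectical

open Dialectical in
/-- semantics correspondence between a strongly consistent AFN and the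
aa-family of semantics of its corresponding ADF. -/
theorem afn_toADF_semantics
    {α : Type} [Fintype α] (fn : AFN α) (h : fn.StronglyConsistent) (X : Set α) :
    (fn.StronglyCoherent X ↔ fn.toADF.PDAcyclicCF X) ∧
    (fn.Admissible X ↔ fn.toADF.AAAdmissible X) ∧
    (fn.Complete X ↔ fn.toADF.AAComplete X) ∧
    (fn.Preferred X ↔ fn.toADF.AAPreferred X) ∧
    (fn.StableAtt X ↔ fn.toADF.IsStable X) ∧
    (fn.IsGrounded X ↔ fn.toADF.IsAcyclicGrounded X) := by
  have hadm := fn.admissible_iff_toADF_aaAdmissible h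
  have hcomp := fn.complete_iff_toADF_aaComplete h
  refine ⟨(fn.toADF_pdAcyclicCF_iff h).symm, hadm X, hcomp X, ?_, ?_, ?_⟩
  · simp only [AFN.Preferred, ADF.AAPreferred, hadm]
  · rw [AFN.StableAtt, ADF.IsStable, fn.toADF_pdAcyclicCF_iff h, fn.toADF_aDiscarded h]
  · simp only [AFN.IsGrounded, ADF.IsAcyclicGrounded, hcomp]
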